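/- One-step sufficient decrease of the GPU-efficient L-BFGS-B iteration (core of Theorem 1): Let f : ℝⁿ → ℝ be differentiable with L-Lipschitz continuous gradient (L > 0), let l, u ∈ ℝⁿ with l_i ≤ u_i, let 0 < ε ≤ L and 0 < c ≤ C. Let x be feasible, let S = S(x) be the working set, let M be a symmetric real matrix indexed by S × S with c‖v‖² ≤ vᵀ M v ≤ C‖v‖² for all v, and let d ∈ ℝⁿ satisfy d_i = 0 for i ∉ S and M d[S] = −∇f(x)[S]. Assume ‖∇f(x)[S]‖ ≥ ε. Suppose p ∈ ℝⁿ satisfies either (case A) x + p is feasible, ⟨p, ∇f(x)⟩ ≤ −ε‖p‖² and ‖p‖² ≥ ε, or (case B) p is the projected direction of d, i.e., p_i = 0 if (d_i < 0 and x_i ≤ l_i + ε) or (d_i > 0 and x_i ≥ u_i − ε), and p_i = d_i otherwise. Then there exists a step size α > 0 such that x + αp is feasible and f(x + αp) ≤ f(x) − min(ε³/(2L), c²ε²/(2LC²), ε²c/(2C)). -/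

import Mathlib

/-!
By the descent lemma, a step `α • p` with `α * L ≤ a` along a direction with
`⟪p, ∇f x⟫ ≤ -a * D` and `‖p‖² ≤ D` decreases `f` by at least `α * a * D / 2`.
In case A take `a = ε`, `D = ‖p‖²`, `α = ε / L`. In case B take `a = c`, `D = ‖d‖²` and
`α = min (c / L) (ε / ‖d‖)`: projecting `d` only zeroes coordinates `i ∈ S` with
`d i * ∇f(x) i > 0`, so `⟪p, ∇f x⟫ ≤ ⟪d, ∇f x⟫ = -d[S]ᵀ M d[S] ≤ -c ‖d‖²`; and
`‖∇f(x)[S]‖ = ‖M d[S]‖ ≤ C ‖d‖` gives `‖d‖ ≥ ε / C`. The step `ε / ‖d‖` moves no coordinate by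
more than `ε`, which keeps the unblocked coordinates inside the box.
-/

open scoped RealInnerProductSpace Classical
open Matrix

/-- The working set of free variables at a feasible point `x` for the
box constraints `l ≤ x ≤ u` and tolerance `ε`. -/
noncomputable def workingSet {n : ℕ} (l u : EuclideanSpace ℝ (Fin n)) (ε : ℝ)
    (f : EuclideanSpace ℝ (Fin n) → ℝ) (x : EuclideanSpace ℝ (Fin n)) :
    Finset (Fin n) :=
  Finset.univ.filter fun i =>
    ¬((x i ≤ l i + ε ∧ 0 ≤ gradient f x i) ∨ (u i - ε ≤ x i ∧ gradient f x i ≤ 0))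

section Descent

variable {E : Type*} [NormedAddCommGroup E] [InnerProductSpace ℝ E] [CompleteSpace E]
  {f : E → ℝ} {L : ℝ}

theorem hasDerivAt_apply_add_smul (hf : Differentiable ℝ f) (x v : E) (t : ℝ) :
    HasDerivAt (fun s : ℝ => f (x + s • v)) ⟪gradient f (x + t • v), v⟫ t := by
  have hline : HasDerivAt (fun s : ℝ => x + s • v) v t := by
    simpa using ((hasDerivAt_id t).smul_const v).const_add x
  exact ((hf _).hasGradientAt.hasFDerivAt.comp_hasDerivAt t hline).congr_deriv (by simp)

theorem apply_add_le_of_gradient_lipschitz (hf : Differentiable ℝ f)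
    (hlip : ∀ x y : E, ‖gradient f x - gradient f y‖ ≤ L * ‖x - y‖) (x v : E) :
    f (x + v) ≤ f x + ⟪gradient f x, v⟫ + L / 2 * ‖v‖ ^ 2 := by
  have hslope : ∀ t ∈ Set.Ico (0 : ℝ) 1,
      ⟪gradient f (x + t • v), v⟫ ≤ ⟪gradient f x, v⟫ + L * t * ‖v‖ ^ 2 := by
    rintro t ⟨ht, -⟩
    have := calc ⟪gradient f (x + t • v) - gradient f x, v⟫
        ≤ ‖gradient f (x + t • v) - gradient f x‖ * ‖v‖ := real_inner_le_norm _ _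
      _ ≤ L * ‖(x + t • v) - x‖ * ‖v‖ := by gcongr; exact hlip _ _
      _ = L * t * ‖v‖ ^ 2 := by
        rw [add_sub_cancel_left, norm_smul, Real.norm_of_nonneg ht]; ring
    rwa [inner_sub_left, sub_le_iff_le_add'] at this
  have hbound : ∀ t : ℝ,
      HasDerivAt (fun s : ℝ => f x + s * ⟪gradient f x, v⟫ + L / 2 * s ^ 2 * ‖v‖ ^ 2)
        (⟪gradient f x, v⟫ + L * t * ‖v‖ ^ 2) t := fun t => by
    refine ((((hasDerivAt_id' t).mul_const ⟪gradient f x, v⟫).const_add (f x)).add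
      (((hasDerivAt_pow 2 t).const_mul (L / 2)).mul_const (‖v‖ ^ 2))).congr_deriv ?_
    push_cast; ring
  have := image_le_of_deriv_right_le_deriv_boundary
    (fun t _ => (hasDerivAt_apply_add_smul hf x v t).continuousAt.continuousWithinAt)
    (fun t _ => (hasDerivAt_apply_add_smul hf x v t).hasDerivWithinAt)
    (by simp) (fun t _ => (hbound t).continuousAt.continuousWithinAt)
    (fun t _ => (hbound t).hasDerivWithinAt) hslope (Set.right_mem_Icc.2 zero_le_one)
  simpa using this

theorem apply_add_smul_le_of_inner_gradient_le (hf : Differentiable ℝ f)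
    (hlip : ∀ x y : E, ‖gradient f x - gradient f y‖ ≤ L * ‖x - y‖) (hL : 0 ≤ L)
    {x p : E} {a D α : ℝ} (hα : 0 ≤ α) (hαL : α * L ≤ a)
    (hpg : ⟪p, gradient f x⟫ ≤ -(a * D)) (hpD : ‖p‖ ^ 2 ≤ D) :
    f (x + α • p) ≤ f x - α * a * D / 2 := by
  have h := apply_add_le_of_gradient_lipschitz hf hlip x (α • p)
  rw [real_inner_smul_right, real_inner_comm, norm_smul, Real.norm_of_nonneg hα] at h
  have hD : 0 ≤ D := (sq_nonneg _).trans hpD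
  have hαL₀ : 0 ≤ α * L := mul_nonneg hα hL
  have h1 : α * ⟪p, gradient f x⟫ ≤ α * -(a * D) := mul_le_mul_of_nonneg_left hpg hα
  have h2 : L / 2 * (α * ‖p‖) ^ 2 ≤ α * a * D / 2 := calc
    L / 2 * (α * ‖p‖) ^ 2 = (α * L) * α * ‖p‖ ^ 2 / 2 := by ring
    _ ≤ a * α * D / 2 := by gcongr; exact mul_nonneg (hαL₀.trans hαL) hα
    _ = α * a * D / 2 := by ring
  linarith

end Descent

theorem Matrix.sum_sq_mulVec_le {m : Type*} [Fintype m] {M : Matrix m m ℝ} {C : ℝ}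
    (hsymm : M.IsSymm) (hpsd : ∀ v, 0 ≤ v ⬝ᵥ M *ᵥ v)
    (hub : ∀ v : m → ℝ, v ⬝ᵥ M *ᵥ v ≤ C * ∑ i, v i ^ 2) (v : m → ℝ) :
    ∑ i, (M *ᵥ v) i ^ 2 ≤ C ^ 2 * ∑ i, v i ^ 2 := by
  set w := M *ᵥ v
  have hW : w ⬝ᵥ M *ᵥ v = ∑ i, w i ^ 2 := by simp only [dotProduct, sq]; rfl
  have hW' : v ⬝ᵥ M *ᵥ w = ∑ i, w i ^ 2 := by
    rw [dotProduct_mulVec, ← mulVec_transpose, hsymm.eq, dotProduct_comm, hW]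
  -- `t ↦ (w - t v)ᵀ M (w - t v)` is a nonnegative quadratic, so its discriminant is `≤ 0`.
  have hquad : ∀ t : ℝ, 0 ≤ (C * ∑ i, v i ^ 2) * (t * t) + (-2 * ∑ i, w i ^ 2) * t
      + C * ∑ i, w i ^ 2 := fun t => by
    have h := hpsd (w - t • v)
    simp only [mulVec_sub, mulVec_smul, sub_dotProduct, dotProduct_sub, smul_dotProduct,
      dotProduct_smul, smul_eq_mul, hW, hW'] at h
    nlinarith [hub w, hub v, mul_self_nonneg t]
  have hdisc := discrim_le_zero hquad
  rw [discrim] at hdisc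
  have hW0 : 0 ≤ ∑ i, w i ^ 2 := by positivity
  have hV0 : 0 ≤ ∑ i, v i ^ 2 := by positivity
  rcases hW0.eq_or_lt with hzero | hpos
  · rw [← hzero]; positivity
  · nlinarith

theorem feasible_add_smul_of_feasible {ι : Type*} {l u x p : EuclideanSpace ℝ ι}
    (hx : ∀ i, l i ≤ x i ∧ x i ≤ u i) (hxp : ∀ i, l i ≤ (x + p) i ∧ (x + p) i ≤ u i) {α : ℝ}
    (hα₀ : 0 ≤ α) (hα₁ : α ≤ 1) (i : ι) : l i ≤ (x + α • p) i ∧ (x + α • p) i ≤ u i := by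
  simpa using (convex_Icc (l i) (u i)).add_smul_mem (hx i) (by simpa using hxp i) ⟨hα₀, hα₁⟩

section Restriction

variable {ι : Type*} [Fintype ι] {S : Finset ι} {d : EuclideanSpace ℝ ι}

theorem EuclideanSpace.inner_eq_sum_subtype (hd : ∀ i ∉ S, d i = 0) (y : EuclideanSpace ℝ ι) :
    ⟪d, y⟫ = ∑ i : S, d i * y i := by
  rw [PiLp.inner_apply, Finset.sum_coe_sort S fun i => d i * y i]
  refine (Finset.sum_subset (Finset.subset_univ S) fun i _ hi => ?_).symm.trans ?_
  · simp [hd i hi]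
  · exact Finset.sum_congr rfl fun i _ => Real.inner_apply _ _

theorem EuclideanSpace.norm_sq_eq_sum_subtype (hd : ∀ i ∉ S, d i = 0) :
    ‖d‖ ^ 2 = ∑ i : S, d i ^ 2 := by
  rw [← real_inner_self_eq_norm_sq, EuclideanSpace.inner_eq_sum_subtype hd]
  simp only [sq]

variable {M : Matrix S S ℝ} {c C : ℝ} {g : EuclideanSpace ℝ ι}

theorem inner_le_of_mulVec_eq_neg (hlb : ∀ v : S → ℝ, c * (∑ i, v i ^ 2) ≤ v ⬝ᵥ M *ᵥ v)
    (hd : ∀ i ∉ S, d i = 0) (heq : M *ᵥ (fun i : S => d i) = fun i : S => -(g i)) :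
    ⟪d, g⟫ ≤ -(c * ‖d‖ ^ 2) := by
  have h := hlb fun i : S => d i
  simp only [heq, dotProduct, mul_neg, Finset.sum_neg_distrib] at h
  rw [EuclideanSpace.inner_eq_sum_subtype hd, EuclideanSpace.norm_sq_eq_sum_subtype hd]
  linarith

theorem sum_sq_le_of_mulVec_eq_neg (hsymm : M.IsSymm) (hc : 0 ≤ c)
    (hlb : ∀ v : S → ℝ, c * (∑ i, v i ^ 2) ≤ v ⬝ᵥ M *ᵥ v)
    (hub : ∀ v : S → ℝ, v ⬝ᵥ M *ᵥ v ≤ C * (∑ i, v i ^ 2))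
    (hd : ∀ i ∉ S, d i = 0) (heq : M *ᵥ (fun i : S => d i) = fun i : S => -(g i)) :
    ∑ i ∈ S, g i ^ 2 ≤ C ^ 2 * ‖d‖ ^ 2 := by
  have h := Matrix.sum_sq_mulVec_le hsymm (fun v => (mul_nonneg hc (by positivity)).trans (hlb v))
    hub fun i : S => d i
  simp only [heq, neg_sq] at h
  rwa [Finset.sum_coe_sort S fun i => g i ^ 2, ← EuclideanSpace.norm_sq_eq_sum_subtype hd] at h

end Restriction

section Projection

variable {ι : Type*} (l u : EuclideanSpace ℝ ι) (ε : ℝ) (x d : EuclideanSpace ℝ ι)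

def IsBlockedAt (i : ι) : Prop :=
  (d i < 0 ∧ x i ≤ l i + ε) ∨ (0 < d i ∧ u i - ε ≤ x i)

def IsProjectedDirection (p : EuclideanSpace ℝ ι) : Prop :=
  (∀ i, IsBlockedAt l u ε x d i → p i = 0) ∧ (∀ i, ¬IsBlockedAt l u ε x d i → p i = d i)

variable {l u ε x d} {p : EuclideanSpace ℝ ι}

theorem IsProjectedDirection.eq_zero_or_eq (hp : IsProjectedDirection l u ε x d p) (i : ι) :
    p i = 0 ∨ p i = d i := by
  by_cases hb : IsBlockedAt l u ε x d i
  exacts [.inl (hp.1 i hb), .inr (hp.2 i hb)]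

variable [Fintype ι]

theorem IsProjectedDirection.norm_le (hp : IsProjectedDirection l u ε x d p) : ‖p‖ ≤ ‖d‖ := by
  refine (pow_le_pow_iff_left₀ (norm_nonneg p) (norm_nonneg d) two_ne_zero).1 ?_
  rw [EuclideanSpace.real_norm_sq_eq, EuclideanSpace.real_norm_sq_eq]
  refine Finset.sum_le_sum fun i _ => ?_
  rcases hp.eq_zero_or_eq i with h | h
  · rw [h, zero_pow two_ne_zero]; positivity
  · rw [h]

theorem IsProjectedDirection.feasible_add_smul (hp : IsProjectedDirection l u ε x d p)
    (hx : ∀ i, l i ≤ x i ∧ x i ≤ u i) {α : ℝ} (hα : 0 ≤ α) (hαd : α * ‖d‖ ≤ ε) (i : ι) :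
    l i ≤ (x + α • p) i ∧ (x + α • p) i ≤ u i := by
  simp only [PiLp.add_apply, PiLp.smul_apply, smul_eq_mul]
  by_cases hb : IsBlockedAt l u ε x d i
  · simpa [hp.1 i hb] using hx i
  have hstep : |α * p i| ≤ ε := by
    rw [abs_mul, abs_of_nonneg hα]
    calc α * |p i| ≤ α * ‖d‖ := by
          gcongr; exact (Real.norm_eq_abs (p i) ▸ PiLp.norm_apply_le p i).trans hp.norm_le
      _ ≤ ε := hαd
  rw [abs_le, hp.2 i hb] at hstep
  rw [hp.2 i hb]
  simp only [IsBlockedAt, not_or, not_and, not_le] at hb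
  have := hx i
  rcases lt_trichotomy (d i) 0 with hneg | hzero | hpos
  · have := hb.1 hneg
    constructor <;> nlinarith
  · simpa [hzero] using hx i
  · have := hb.2 hpos
    constructor <;> nlinarith

end Projection

theorem mul_gradient_nonneg_of_isBlockedAt {n : ℕ} {l u x d : EuclideanSpace ℝ (Fin n)} {ε : ℝ}
    {f : EuclideanSpace ℝ (Fin n) → ℝ} {i : Fin n} (hi : i ∈ workingSet l u ε f x)
    (hb : IsBlockedAt l u ε x d i) : 0 ≤ d i * gradient f x i := by
  simp only [workingSet, Finset.mem_filter, Finset.mem_univ, true_and, not_or, not_and,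
    not_le] at hi
  rcases hb with ⟨hd, hx⟩ | ⟨hd, hx⟩
  · exact (mul_pos_of_neg_of_neg hd (hi.1 hx)).le
  · exact (mul_pos hd (hi.2 hx)).le

theorem IsProjectedDirection.inner_gradient_le {n : ℕ} {l u x d p : EuclideanSpace ℝ (Fin n)}
    {ε : ℝ} {f : EuclideanSpace ℝ (Fin n) → ℝ} (hp : IsProjectedDirection l u ε x d p)
    (hd : ∀ i ∉ workingSet l u ε f x, d i = 0) :
    ⟪p, gradient f x⟫ ≤ ⟪d, gradient f x⟫ := by
  simp only [PiLp.inner_apply, Real.inner_apply]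
  refine Finset.sum_le_sum fun i _ => ?_
  by_cases hb : IsBlockedAt l u ε x d i
  · rw [hp.1 i hb, zero_mul]
    by_cases hi : i ∈ workingSet l u ε f x
    · exact mul_gradient_nonneg_of_isBlockedAt hi hb
    · simp [hd i hi]
  · rw [hp.2 i hb]

theorem le_min_step_mul_sq {ε c C L D : ℝ} (hε : 0 < ε) (hc : 0 < c) (hC : 0 < C) (hL : 0 < L)
    (hD : 0 < D) (hεD : ε ≤ C * D) :
    min (c ^ 2 * ε ^ 2 / (2 * L * C ^ 2)) (ε ^ 2 * c / (2 * C)) ≤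
      min (c / L) (ε / D) * c * D ^ 2 / 2 := by
  rcases min_cases (c / L) (ε / D) with ⟨h, -⟩ | ⟨h, -⟩ <;> rw [h]
  · calc _ ≤ c ^ 2 * ε ^ 2 / (2 * L * C ^ 2) := min_le_left _ _
      _ ≤ c ^ 2 * (C * D) ^ 2 / (2 * L * C ^ 2) := by gcongr
      _ = c / L * c * D ^ 2 / 2 := by field_simp
  · calc _ ≤ ε ^ 2 * c / (2 * C) := min_le_right _ _
      _ = ε * c * ε / (2 * C) := by ring
      _ ≤ ε * c * (C * D) / (2 * C) := by gcongr
      _ = ε / D * c * D ^ 2 / 2 := by field_simp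

theorem stmt9_general {n : ℕ} (f : EuclideanSpace ℝ (Fin n) → ℝ) (L ε c C : ℝ)
    (hL : 0 < L) (hf : Differentiable ℝ f)
    (hlip : ∀ x y : EuclideanSpace ℝ (Fin n),
      ‖gradient f x - gradient f y‖ ≤ L * ‖x - y‖)
    (l u : EuclideanSpace ℝ (Fin n))
    (hε : 0 < ε) (hεL : ε ≤ L) (hc : 0 < c) (hcC : c ≤ C)
    (x : EuclideanSpace ℝ (Fin n)) (hfeas : ∀ i, l i ≤ x i ∧ x i ≤ u i)
    (S : Finset (Fin n)) (hS : S = workingSet l u ε f x)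
    (M : Matrix S S ℝ) (hsymm : M.IsSymm)
    (hlb : ∀ v : S → ℝ, c * (∑ i, v i ^ 2) ≤ v ⬝ᵥ M.mulVec v)
    (hub : ∀ v : S → ℝ, v ⬝ᵥ M.mulVec v ≤ C * (∑ i, v i ^ 2))
    (d : EuclideanSpace ℝ (Fin n)) (hd0 : ∀ i, i ∉ S → d i = 0)
    (heq : M.mulVec (fun i : S => d i) = fun i : S => -(gradient f x i))
    (hgrad : ε ≤ Real.sqrt (∑ i ∈ S, gradient f x i ^ 2))
    (p : EuclideanSpace ℝ (Fin n))
    (hp : ((∀ i, l i ≤ (x + p) i ∧ (x + p) i ≤ u i) ∧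
            ⟪p, gradient f x⟫ ≤ -ε * ‖p‖ ^ 2 ∧ ε ≤ ‖p‖ ^ 2) ∨
          ((∀ i, ((d i < 0 ∧ x i ≤ l i + ε) ∨ (0 < d i ∧ u i - ε ≤ x i)) → p i = 0) ∧
           (∀ i, ¬((d i < 0 ∧ x i ≤ l i + ε) ∨ (0 < d i ∧ u i - ε ≤ x i)) → p i = d i))) :
    ∃ α : ℝ, 0 < α ∧ (∀ i, l i ≤ (x + α • p) i ∧ (x + α • p) i ≤ u i) ∧
      f (x + α • p) ≤
        f x - min (ε ^ 3 / (2 * L))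
          (min (c ^ 2 * ε ^ 2 / (2 * L * C ^ 2)) (ε ^ 2 * c / (2 * C))) := by
  have hC : 0 < C := hc.trans_le hcC
  rcases hp with ⟨hxp, hpg, hεp⟩ | (hproj : IsProjectedDirection l u ε x d p)
  · refine ⟨ε / L, by positivity,
      feasible_add_smul_of_feasible hfeas hxp (by positivity) ((div_le_one hL).2 hεL), ?_⟩
    have hdec := apply_add_smul_le_of_inner_gradient_le hf hlip hL.le (a := ε) (by positivity)
      (div_mul_cancel₀ ε hL.ne').le (by linarith) le_rfl
    calc f (x + (ε / L) • p) ≤ f x - ε / L * ε * ‖p‖ ^ 2 / 2 := hdec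
      _ ≤ f x - ε / L * ε * ε / 2 := by gcongr
      _ = f x - ε ^ 3 / (2 * L) := by ring
      _ ≤ _ := by gcongr; exact min_le_left _ _
  · subst hS
    have hεd : ε ≤ C * ‖d‖ := by
      refine hgrad.trans (Real.sqrt_le_iff.2 ⟨by positivity, ?_⟩)
      rw [mul_pow]
      exact sum_sq_le_of_mulVec_eq_neg hsymm hc.le hlb hub hd0 heq
    have hd : 0 < ‖d‖ := pos_of_mul_pos_right (hε.trans_le hεd) hC.le
    set α := min (c / L) (ε / ‖d‖)
    have hα : 0 < α := lt_min (by positivity) (by positivity)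
    refine ⟨α, hα, hproj.feasible_add_smul hfeas hα.le ((le_div_iff₀ hd).1 (min_le_right _ _)), ?_⟩
    have hdec := apply_add_smul_le_of_inner_gradient_le hf hlip hL.le hα.le
      ((le_div_iff₀ hL).1 (min_le_left _ _))
      ((hproj.inner_gradient_le hd0).trans (inner_le_of_mulVec_eq_neg hlb hd0 heq))
      (pow_le_pow_left₀ (norm_nonneg p) hproj.norm_le 2)
    calc f (x + α • p) ≤ f x - α * c * ‖d‖ ^ 2 / 2 := hdec
      _ ≤ _ := by
        gcongr
        exact (min_le_right _ _).trans (le_min_step_mul_sq hε hc hC hL hd hεd)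

theorem stmt9 {n : ℕ} (hn : 1 ≤ n) (f : EuclideanSpace ℝ (Fin n) → ℝ) (L ε c C : ℝ)
    (hL : 0 < L) (hf : Differentiable ℝ f)
    (hlip : ∀ x y : EuclideanSpace ℝ (Fin n),
      ‖gradient f x - gradient f y‖ ≤ L * ‖x - y‖)
    (l u : EuclideanSpace ℝ (Fin n)) (hlu : ∀ i, l i ≤ u i)
    (hε : 0 < ε) (hεL : ε ≤ L) (hc : 0 < c) (hcC : c ≤ C)
    (x : EuclideanSpace ℝ (Fin n)) (hfeas : ∀ i, l i ≤ x i ∧ x i ≤ u i)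
    (S : Finset (Fin n)) (hS : S = workingSet l u ε f x)
    (M : Matrix S S ℝ) (hsymm : M.IsSymm)
    (hlb : ∀ v : S → ℝ, c * (∑ i, v i ^ 2) ≤ v ⬝ᵥ M.mulVec v)
    (hub : ∀ v : S → ℝ, v ⬝ᵥ M.mulVec v ≤ C * (∑ i, v i ^ 2))
    (d : EuclideanSpace ℝ (Fin n)) (hd0 : ∀ i, i ∉ S → d i = 0)
    (heq : M.mulVec (fun i : S => d i) = fun i : S => -(gradient f x i))
    (hgrad : ε ≤ Real.sqrt (∑ i ∈ S, gradient f x i ^ 2))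
    (p : EuclideanSpace ℝ (Fin n))
    (hp : ((∀ i, l i ≤ (x + p) i ∧ (x + p) i ≤ u i) ∧
            ⟪p, gradient f x⟫ ≤ -ε * ‖p‖ ^ 2 ∧ ε ≤ ‖p‖ ^ 2) ∨
          ((∀ i, ((d i < 0 ∧ x i ≤ l i + ε) ∨ (0 < d i ∧ u i - ε ≤ x i)) → p i = 0) ∧
           (∀ i, ¬((d i < 0 ∧ x i ≤ l i + ε) ∨ (0 < d i ∧ u i - ε ≤ x i)) → p i = d i))) :
    ∃ α : ℝ, 0 < α ∧ (∀ i, l i ≤ (x + α • p) i ∧ (x + α • p) i ≤ u i) ∧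
      f (x + α • p) ≤
        f x - min (ε ^ 3 / (2 * L))
          (min (c ^ 2 * ε ^ 2 / (2 * L * C ^ 2)) (ε ^ 2 * c / (2 * C))) :=
  stmt9_general f L ε c C hL hf hlip l u hε hεL hc hcC x hfeas S hS M hsymm hlb hub d hd0 heq hgrad
    p hp
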